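/- Let P = {V_1, ..., V_k} be a partition of the vertex set of a connected graph G, and let H be the spanning subgraph of G whose edges are those of G lying inside a single part. Then max over adjacent pairs V_i, V_j in G/P of χ(G[V_i ∪ V_j]) ≤ χ_G(H) ≤ max over adjacent pairs V_i, V_j in G/P of (χ(G[V_i]) + χ(G[V_j])). -/
import Mathlib


open SimpleGraph

attribute [local instance] Classical.propDecidable

variable {V : Type*}

/-- `f` is a proper coloring of `H`. -/
def IsProperColoring (H : SimpleGraph V) (f : V → ℕ) : Prop :=
  ∀ u v, H.Adj u v → f u ≠ f v

/-- `f` and `g` are compatible colorings of the spanning subgraph `H` with respect to `G`: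
both are proper colorings of `H` and for every edge of `G` not in `H`, `f u ≠ g v`. -/
def CompatiblePair (G H : SimpleGraph V) (f g : V → ℕ) : Prop :=
  IsProperColoring H f ∧ IsProperColoring H g ∧
    ∀ u v, G.Adj u v → ¬ H.Adj u v → f u ≠ g v

/-- The chromatic number of `H` with respect to `G`: the least `n` such that `H` admits a
pair of compatible colorings with colors `{0, …, n-1}`. -/
noncomputable def relChrom (G H : SimpleGraph V) : ℕ :=
  sInf {n | ∃ f g : V → ℕ, (∀ v, f v < n) ∧ (∀ v, g v < n) ∧ CompatiblePair G H f g}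

/-- The (ordinary) chromatic number of a graph, as a natural number. -/
noncomputable def chrom (G : SimpleGraph V) : ℕ := sInf {n | G.Colorable n}

/-- The Seidel switch `H_X` of a spanning subgraph `H` of `G` at a set `X` of vertices. -/
def seidelSwitch (G H : SimpleGraph V) (X : Set V) : SimpleGraph V :=
  SimpleGraph.fromRel fun u v =>
    ((u ∈ X ↔ v ∈ X) ∧ H.Adj u v) ∨ (¬(u ∈ X ↔ v ∈ X) ∧ G.Adj u v ∧ ¬ H.Adj u v)

/-- The co-support of a signing `φ` of `G`: the spanning subgraph whose edges are the
edges of `G` with sign `+1` (here, where `φ` holds). -/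
def cosupport (G : SimpleGraph V) (φ : V → V → Prop) : SimpleGraph V :=
  SimpleGraph.fromRel fun u v => G.Adj u v ∧ φ u v

/-- Switching of a signing at a vertex set `X`: the sign of an edge is reversed exactly
when the edge has exactly one endpoint in `X` (`True` plays the role of `+1`). -/
def switchSign (φ : V → V → Prop) (X : Set V) : V → V → Prop :=
  fun u v => φ u v ↔ (u ∈ X ↔ v ∈ X)

/-- The double covering `G^φ` of `G` determined by a signing `φ` (with `true ↔ +1`;
second coordinates agree along an edge iff the edge has sign `+1`). -/
def doubleCover (G : SimpleGraph V) (φ : V → V → Prop) : SimpleGraph (V × Bool) :=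
  SimpleGraph.fromRel fun x y => G.Adj x.1 y.1 ∧ (x.2 = y.2 ↔ φ x.1 y.1)

/-- The quotient graph `G/P` of a partition of the vertices given by the fibers of `c`. -/
def quotientGraph (G : SimpleGraph V) {ι : Type*} (c : V → ι) : SimpleGraph ι :=
  SimpleGraph.fromRel fun i j => ∃ u v : V, c u = i ∧ c v = j ∧ G.Adj u v

/-- The spanning subgraph of `G` consisting of the edges lying inside a single part of the
partition given by the fibers of `c` (the disjoint union of the induced subgraphs on parts). -/
def partsSubgraph (G : SimpleGraph V) {ι : Type*} (c : V → ι) : SimpleGraph V :=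
  SimpleGraph.fromRel fun u v => G.Adj u v ∧ c u = c v

lemma partsSubgraph_adj' (G : SimpleGraph V) {ι : Type*} (c : V → ι) (u v : V) :
    (partsSubgraph G c).Adj u v ↔ u ≠ v ∧ G.Adj u v ∧ c u = c v := by
  simp only [partsSubgraph, fromRel_adj]
  constructor
  · rintro ⟨h, h1 | h2⟩
    exacts [⟨h, h1⟩, ⟨h, h2.1.symm, h2.2.symm⟩]
  · rintro ⟨h, h1, h2⟩; exact ⟨h, Or.inl ⟨h1, h2⟩⟩

lemma qadj_of {ι : Type*} {G : SimpleGraph V} {c : V → ι} {u v : V}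
    (h : G.Adj u v) (hne : c u ≠ c v) : (quotientGraph G c).Adj (c u) (c v) :=
  ⟨hne, Or.inl ⟨u, v, rfl, rfl, h⟩⟩

lemma chrom_colorable (G : SimpleGraph V) [Fintype V] : G.Colorable (chrom G) :=
  Nat.sInf_mem (⟨Fintype.card V, G.colorable_of_fintype⟩ : Set.Nonempty {n | G.Colorable n})

lemma exists_cross {ι : Type*} (G : SimpleGraph V) (c : V → ι) {u w : V} (p : G.Walk u w) :
    c u ≠ c w → ∃ x y, G.Adj x y ∧ c x = c u ∧ c y ≠ c u := by
  induction p with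
  | nil => exact fun h => absurd rfl h
  | @cons a b w h p ih =>
    intro hne
    by_cases hc : c a = c b
    · obtain ⟨x, y, hxy, hx, hy⟩ := ih (hc ▸ hne)
      exact ⟨x, y, hxy, hx.trans hc.symm, fun hh => hy (hh.trans hc)⟩
    · exact ⟨a, b, h, rfl, fun hh => hc hh.symm⟩

lemma part_adj {ι : Type*} {G : SimpleGraph V} (hG : G.Connected) {c : V → ι}
    (hne : ∃ u v : V, c u ≠ c v) (v : V) : ∃ j, (quotientGraph G c).Adj (c v) j := by
  obtain ⟨u0, v0, h0⟩ := hne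
  have hw : ∃ w, c w ≠ c v := by
    by_cases h : c u0 = c v
    · exact ⟨v0, fun hh => h0 (h.trans hh.symm)⟩
    · exact ⟨u0, h⟩
  obtain ⟨w, hw⟩ := hw
  obtain ⟨p⟩ := hG.preconnected v w
  obtain ⟨x, y, hxy, hx, hy⟩ := exists_cross G c p (fun h => hw h.symm)
  have hne2 : c x ≠ c y := by intro h; exact hy (by rw [← h]; exact hx)
  have hq := qadj_of hxy hne2
  rw [hx] at hq
  exact ⟨c y, hq⟩

/-- Bounds on `χ_G(H)` for `H` the union of the induced subgraphs on the parts of a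
partition, in terms of chromatic numbers of unions of pairs of adjacent parts. -/
theorem relChrom_partsSubgraph_bounds [Fintype V] {ι : Type*} [Fintype ι]
    (G : SimpleGraph V) (hG : G.Connected) (c : V → ι)
    (hne : ∃ u v : V, c u ≠ c v) :
    (Finset.univ.filter fun p : ι × ι => (quotientGraph G c).Adj p.1 p.2).sup
        (fun p => chrom (G.induce {v | c v = p.1 ∨ c v = p.2}))
      ≤ relChrom G (partsSubgraph G c) ∧
    relChrom G (partsSubgraph G c)
      ≤ (Finset.univ.filter fun p : ι × ι => (quotientGraph G c).Adj p.1 p.2).sup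
          (fun p => chrom (G.induce {v | c v = p.1}) + chrom (G.induce {v | c v = p.2})) := by
  classical
  set H := partsSubgraph G c with hH
  have Hadj : ∀ u v, H.Adj u v ↔ u ≠ v ∧ G.Adj u v ∧ c u = c v := partsSubgraph_adj' G c
  obtain ⟨C0, hC0⟩ := (G.colorable_iff_exists_bdd_nat_coloring _).mp G.colorable_of_fintype
  have hS : (Fintype.card V) ∈
      {n | ∃ f g : V → ℕ, (∀ v, f v < n) ∧ (∀ v, g v < n) ∧ CompatiblePair G H f g} := by
    refine ⟨fun v => C0 v, fun v => C0 v, hC0, hC0, ?_, ?_, ?_⟩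
    · intro u v huv; exact C0.valid ((Hadj u v).mp huv).2.1
    · intro u v huv; exact C0.valid ((Hadj u v).mp huv).2.1
    · intro u v huv _; exact C0.valid huv
  constructor
  · -- lower bound
    refine le_csInf ⟨_, hS⟩ ?_
    rintro n ⟨f, g, hf, hg, pf, pg, cross⟩
    refine Finset.sup_le ?_
    rintro p hp
    rw [Finset.mem_filter] at hp
    have hq := hp.2
    refine Nat.sInf_le ?_
    show (G.induce {v | c v = p.1 ∨ c v = p.2}).Colorable n
    rw [SimpleGraph.colorable_iff_exists_bdd_nat_coloring]
    refine ⟨SimpleGraph.Coloring.mk (fun x => if c x.1 = p.1 then f x.1 else g x.1) ?_, ?_⟩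
    · rintro ⟨x, hx⟩ ⟨y, hy⟩ hadj
      have hxy : G.Adj x y := hadj
      simp only [Set.mem_setOf_eq] at hx hy
      dsimp only
      by_cases h1 : c x = p.1 <;> by_cases h2 : c y = p.1
      · rw [if_pos h1, if_pos h2]
        exact pf x y ((Hadj x y).mpr ⟨hxy.ne, hxy, h1.trans h2.symm⟩)
      · rw [if_pos h1, if_neg h2]
        have hnH : ¬ H.Adj x y := fun hh => h2 (((Hadj x y).mp hh).2.2 ▸ h1)
        exact cross x y hxy hnH
      · rw [if_neg h1, if_pos h2]
        have hnH : ¬ H.Adj y x := fun hh => h1 (((Hadj y x).mp hh).2.2 ▸ h2)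
        exact (cross y x hxy.symm hnH).symm
      · rw [if_neg h1, if_neg h2]
        have hcx := hx.resolve_left h1; have hcy := hy.resolve_left h2
        exact pg x y ((Hadj x y).mpr ⟨hxy.ne, hxy, hcx.trans hcy.symm⟩)
    · rintro ⟨x, hx⟩
      show (if c x = p.1 then f x else g x) < n
      by_cases h : c x = p.1
      · rw [if_pos h]; exact hf x
      · rw [if_neg h]; exact hg x
  · -- upper bound
    set m := (Finset.univ.filter fun p : ι × ι => (quotientGraph G c).Adj p.1 p.2).sup
        (fun p => chrom (G.induce {v | c v = p.1}) + chrom (G.induce {v | c v = p.2})) with hm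
    have key : ∀ i : ι, ∃ D : ↥{v | c v = i} → ℕ,
        (∀ x, D x < chrom (G.induce {v | c v = i})) ∧
        ∀ x y : ↥{v | c v = i}, G.Adj x.1 y.1 → D x ≠ D y := by
      intro i
      obtain ⟨C, hC⟩ := ((G.induce {v | c v = i}).colorable_iff_exists_bdd_nat_coloring _).mp
        (chrom_colorable _)
      exact ⟨fun x => C x, hC, fun x y hxy => C.valid hxy⟩
    choose D hD1 hD2 using key
    set F : V → ℕ := fun v => D (c v) ⟨v, rfl⟩ with hF
    have Fspec : ∀ (v : V) (i : ι) (h : c v = i), F v = D i ⟨v, h⟩ := by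
      intro v i h; subst h; rfl
    have hFlt : ∀ v, F v < chrom (G.induce {w | c w = c v}) := fun v => hD1 (c v) ⟨v, rfl⟩
    have hFne : ∀ u v, G.Adj u v → c u = c v → F u ≠ F v := by
      intro u v huv hc
      rw [Fspec u (c v) hc, Fspec v (c v) rfl]
      exact hD2 (c v) _ _ huv
    have hmem : ∀ i j, (quotientGraph G c).Adj i j →
        chrom (G.induce {v | c v = i}) + chrom (G.induce {v | c v = j}) ≤ m := by
      intro i j h
      exact Finset.le_sup
        (f := fun p : ι × ι => chrom (G.induce {v | c v = p.1}) + chrom (G.induce {v | c v = p.2}))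
        (Finset.mem_filter.mpr ⟨Finset.mem_univ (i, j), h⟩)
    have ham : ∀ v : V, chrom (G.induce {w | c w = c v}) ≤ m := by
      intro v
      obtain ⟨j, hj⟩ := part_adj hG hne v
      exact le_trans (Nat.le_add_right _ _) (hmem _ _ hj)
    refine Nat.sInf_le ⟨F, fun v => F v + (m - chrom (G.induce {w | c w = c v})), ?_, ?_, ?_, ?_, ?_⟩
    · intro v; exact lt_of_lt_of_le (hFlt v) (ham v)
    · intro v; dsimp only; have := hFlt v; have := ham v; omega
    · intro u v huv
      obtain ⟨_, h1, h2⟩ := (Hadj u v).mp huv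
      exact hFne u v h1 h2
    · intro u v huv
      obtain ⟨_, h1, h2⟩ := (Hadj u v).mp huv
      intro he
      dsimp only at he
      rw [h2] at he
      exact hFne u v h1 h2 (by omega)
    · intro u v huv hnH
      have hcc : c u ≠ c v := fun h => hnH ((Hadj u v).mpr ⟨huv.ne, huv, h⟩)
      have hq := qadj_of huv hcc
      have hle := hmem _ _ hq
      have h1 := hFlt u; have h2 := hFlt v
      dsimp only
      omega
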